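/- Let $\Phi$ and $\varphi$ be the standard normal c.d.f. and density. Let $\Delta \ge \Delta_x \ge 0$ with $\Delta^2 - \Delta_x^2 \ge \Delta^2/(1+\Lambda)$ for some $\Lambda \ge 0$. Then $\Phi(\Delta/2) - \Phi(\Delta_x/2) \ge \frac{1}{4\sqrt{2\pi}}\cdot\frac{\Delta}{1+\Lambda}\exp(-\Delta^2/8)$. -/

import Mathlib

/-- The standard normal cumulative distribution function. -/
noncomputable def stdNormalCDF (x : ℝ) : ℝ :=
  ∫ t in Set.Iic x, Real.exp (-t ^ 2 / 2) / Real.sqrt (2 * Real.pi)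

/-!
The gap `Φ(Δ/2) - Φ(Δx/2)` is the integral of the density `φ` over `[Δx/2, Δ/2]`. Since `φ` is
decreasing on `[0, ∞)`, the gap is at least `(Δ - Δx)/2 · φ(Δ/2)`, and `φ(Δ/2) = e^{-Δ²/8}/√(2π)`.
Finally `Δ - Δx = (Δ² - Δx²)/(Δ + Δx) ≥ Δ/(2(1+Λ))` because `Δ + Δx ≤ 2Δ`.
-/

open Real Set MeasureTheory

noncomputable def stdNormalPDF (t : ℝ) : ℝ :=
  exp (-t ^ 2 / 2) / sqrt (2 * π)

lemma stdNormalPDF_antitoneOn : AntitoneOn stdNormalPDF (Ici 0) := by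
  intro s hs t ht hst
  unfold stdNormalPDF
  gcongr

lemma integrable_stdNormalPDF : Integrable stdNormalPDF := by
  have h := (integrable_exp_neg_mul_sq (b := 1 / 2) (by norm_num)).div_const (sqrt (2 * π))
  convert h using 2 with t
  unfold stdNormalPDF
  ring_nf

lemma stdNormalCDF_sub_stdNormalCDF (a b : ℝ) :
    stdNormalCDF b - stdNormalCDF a = ∫ t in a..b, stdNormalPDF t :=
  intervalIntegral.integral_Iic_sub_Iic integrable_stdNormalPDF.integrableOn
    integrable_stdNormalPDF.integrableOn

lemma sub_mul_stdNormalPDF_le_stdNormalCDF_sub {a b : ℝ} (ha : 0 ≤ a) (hab : a ≤ b) :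
    (b - a) * stdNormalPDF b ≤ stdNormalCDF b - stdNormalCDF a := by
  have hb : 0 ≤ b := ha.trans hab
  calc (b - a) * stdNormalPDF b = ∫ _ in a..b, stdNormalPDF b := by simp
    _ ≤ ∫ t in a..b, stdNormalPDF t :=
        intervalIntegral.integral_mono_on hab intervalIntegrable_const
          integrable_stdNormalPDF.intervalIntegrable fun t ht =>
            stdNormalPDF_antitoneOn (ha.trans ht.1) hb ht.2
    _ = stdNormalCDF b - stdNormalCDF a := (stdNormalCDF_sub_stdNormalCDF a b).symm

lemma div_le_two_mul_sub_of_sq_div_le {x y c : ℝ} (hy : 0 ≤ y) (hyx : y ≤ x)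
    (h : x ^ 2 / c ≤ x ^ 2 - y ^ 2) : x / c ≤ 2 * (x - y) := by
  rcases le_or_gt c 0 with hc | hc
  · linarith [div_nonpos_of_nonneg_of_nonpos (hy.trans hyx) hc]
  rw [div_le_iff₀ hc]
  rw [div_le_iff₀ hc] at h
  rcases (hy.trans hyx).eq_or_lt with hx | hx
  · nlinarith
  have hsq : x * x ≤ x * (2 * (x - y) * c) := by nlinarith [mul_nonneg (sub_nonneg.2 hyx) hc.le]
  exact le_of_mul_le_mul_left hsq hx

theorem stmt11_general (Δ Δx Lam : ℝ) (hx0 : 0 ≤ Δx) (hxle : Δx ≤ Δ)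
    (h1 : Δ ^ 2 / (1 + Lam) ≤ Δ ^ 2 - Δx ^ 2) :
    (1 / (4 * Real.sqrt (2 * Real.pi))) * (Δ / (1 + Lam)) * Real.exp (-Δ ^ 2 / 8)
      ≤ stdNormalCDF (Δ / 2) - stdNormalCDF (Δx / 2) := by
  have hpdf : stdNormalPDF (Δ / 2) = exp (-Δ ^ 2 / 8) / sqrt (2 * π) := by
    unfold stdNormalPDF; ring_nf
  have hgap := div_le_two_mul_sub_of_sq_div_le hx0 hxle h1
  calc (1 / (4 * sqrt (2 * π))) * (Δ / (1 + Lam)) * exp (-Δ ^ 2 / 8)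
      = Δ / (1 + Lam) / 4 * stdNormalPDF (Δ / 2) := by rw [hpdf]; ring
    _ ≤ (Δ / 2 - Δx / 2) * stdNormalPDF (Δ / 2) := by
        gcongr
        · unfold stdNormalPDF; positivity
        · linarith
    _ ≤ stdNormalCDF (Δ / 2) - stdNormalCDF (Δx / 2) :=
        sub_mul_stdNormalPDF_le_stdNormalCDF_sub (by positivity) (by linarith)

/-- Lower bound on the gap of normal CDFs:
`Φ(Δ/2) - Φ(Δx/2) ≥ (1/(4√(2π))) (Δ/(1+Λ)) exp(-Δ²/8)`. -/
theorem stmt11 (Δ Δx Lam : ℝ) (hx0 : 0 ≤ Δx) (hxle : Δx ≤ Δ) (hLam : 0 ≤ Lam)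
    (h1 : Δ ^ 2 / (1 + Lam) ≤ Δ ^ 2 - Δx ^ 2) :
    (1 / (4 * Real.sqrt (2 * Real.pi))) * (Δ / (1 + Lam)) * Real.exp (-Δ ^ 2 / 8)
      ≤ stdNormalCDF (Δ / 2) - stdNormalCDF (Δx / 2) :=
  stmt11_general Δ Δx Lam hx0 hxle h1
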